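/- Let M = (m_{ij}) be a symmetric matrix with m_{ij} ≥ 2 for all i ≠ j, and set b_{ij} = a_{ij}^{m_{ij}} ∈ Br_n, with the conventions a_{ji} = a_{ij} and b_{ji} = b_{ij}. Then for all triples i,j,k in cyclic order (i.e. i<j<k, j<k<i, or k<i<j) with m_{ij} = 2 and m_{ik} = m_{jk} = 3, the relations b_{ij} b_{jk} b_{ij} b_{ik} b_{jk} = b_{jk} b_{ij} b_{ik} b_{jk} b_{ij} = b_{ij} b_{ik} b_{jk} b_{ij} b_{ik} hold in Br_n. -/
import Mathlib


/-- Relators for the braid group `Br_n` on generators `σ_1, …, σ_{n-1}`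
(indexed by natural numbers; out-of-range generators are killed). -/
def braidRels (n : ℕ) : Set (FreeGroup ℕ) :=
  {r | (∃ i, 1 ≤ i ∧ i + 2 ≤ n ∧
        r = FreeGroup.of i * FreeGroup.of (i+1) * FreeGroup.of i *
            (FreeGroup.of (i+1) * FreeGroup.of i * FreeGroup.of (i+1))⁻¹) ∨
       (∃ i j, 1 ≤ i ∧ i + 2 ≤ j ∧ j + 1 ≤ n ∧
        r = FreeGroup.of i * FreeGroup.of j * (FreeGroup.of j * FreeGroup.of i)⁻¹) ∨
       (∃ i, (i = 0 ∨ n ≤ i) ∧ r = FreeGroup.of i)}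

/-- The braid group on `n` strands. -/
abbrev BraidGroup (n : ℕ) := PresentedGroup (braidRels n)

/-- The Artin generator `σ_i` of the braid group (`1 ≤ i ≤ n-1`). -/
def braidGen (n i : ℕ) : BraidGroup n := PresentedGroup.of i

/-- The band generator `a_{ij} = (σ_{j-1} ⋯ σ_{i+1}) σ_i (σ_{j-1} ⋯ σ_{i+1})⁻¹`. -/
def band (n i j : ℕ) : BraidGroup n :=
  (((List.range (j - 1 - i)).map (fun t => braidGen n (j - 1 - t))).prod) * braidGen n i *
  (((List.range (j - 1 - i)).map (fun t => braidGen n (j - 1 - t))).prod)⁻¹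

/-- The band generator with the convention `a_{ji} = a_{ij}`. -/
def bandS (n i j : ℕ) : BraidGroup n := band n (min i j) (max i j)

/-- The subgroup `E_M ≤ Br_n` generated by the powers `a_{ij}^{m_{ij}}`. -/
def bandSubgroup (n : ℕ) (m : ℕ → ℕ → ℕ) : Subgroup (BraidGroup n) :=
  Subgroup.closure {x | ∃ i j, 1 ≤ i ∧ i < j ∧ j ≤ n ∧ x = band n i j ^ m i j}
/-- `b_{ij} = a_{ij}^{m_{ij}}` with the unordered-pair conventions `a_{ji} = a_{ij}`,
`b_{ji} = b_{ij}`. -/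
def bp (n : ℕ) (m : ℕ → ℕ → ℕ) (i j : ℕ) : BraidGroup n := bandS n i j ^ m i j



section WordLemmas

variable {G : Type*} [Group G]

/-- Key positive-word identity in the braid group on two generators. -/
private lemma braid_key (x y : G) (hb : x*y*x = y*x*y) :
    x*y*y*y*x*y*y*y*x*y*y*y = y*y*y*x*y*y*y*x*y*y*y*x := by
  calc x*y*y*y*x*y*y*y*x*y*y*y
    = x*(y*(y)) * ((y*x*y) * (y*(y*(x*(y*(y*(y))))))) := by group
      _ = x*(y*(y)) * ((x*y*x) * (y*(y*(x*(y*(y*(y))))))) := by rw [← hb]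
      _ = x*(y) * ((y*x*y) * (x*(y*(y*(x*(y*(y*(y)))))))) := by group
      _ = x*(y) * ((x*y*x) * (x*(y*(y*(x*(y*(y*(y)))))))) := by rw [← hb]
      _ = (x*y*x) * (y*(x*(x*(y*(y*(x*(y*(y*(y))))))))) := by group
      _ = (y*x*y) * (y*(x*(x*(y*(y*(x*(y*(y*(y))))))))) := by rw [hb]
      _ = y*(x*(y*(y*(x*(x*(y)))))) * ((y*x*y) * (y*(y))) := by group
      _ = y*(x*(y*(y*(x*(x*(y)))))) * ((x*y*x) * (y*(y))) := by rw [← hb]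
      _ = y*(x*(y*(y*(x)))) * ((x*y*x) * (y*(x*(y*(y))))) := by group
      _ = y*(x*(y*(y*(x)))) * ((y*x*y) * (y*(x*(y*(y))))) := by rw [hb]
      _ = y*(x*(y)) * ((y*x*y) * (x*(y*(y*(x*(y*(y))))))) := by group
      _ = y*(x*(y)) * ((x*y*x) * (x*(y*(y*(x*(y*(y))))))) := by rw [← hb]
      _ = y * ((x*y*x) * (y*(x*(x*(y*(y*(x*(y*(y))))))))) := by group
      _ = y * ((y*x*y) * (y*(x*(x*(y*(y*(x*(y*(y))))))))) := by rw [hb]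
      _ = y*(y*(x*(y*(y*(x*(x*(y))))))) * ((y*x*y) * (y)) := by group
      _ = y*(y*(x*(y*(y*(x*(x*(y))))))) * ((x*y*x) * (y)) := by rw [← hb]
      _ = y*(y*(x*(y*(y*(x))))) * ((x*y*x) * (y*(x*(y)))) := by group
      _ = y*(y*(x*(y*(y*(x))))) * ((y*x*y) * (y*(x*(y)))) := by rw [hb]
      _ = y*(y*(x*(y))) * ((y*x*y) * (x*(y*(y*(x*(y)))))) := by group
      _ = y*(y*(x*(y))) * ((x*y*x) * (x*(y*(y*(x*(y)))))) := by rw [← hb]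
      _ = y*(y) * ((x*y*x) * (y*(x*(x*(y*(y*(x*(y)))))))) := by group
      _ = y*(y) * ((y*x*y) * (y*(x*(x*(y*(y*(x*(y)))))))) := by rw [hb]
      _ = y*(y*(y*(x*(y*(y*(x*(x*(y)))))))) * (y*x*y) := by group
      _ = y*(y*(y*(x*(y*(y*(x*(x*(y)))))))) * (x*y*x) := by rw [← hb]
      _ = y*(y*(y*(x*(y*(y*(x)))))) * ((x*y*x) * (y*(x))) := by group
      _ = y*(y*(y*(x*(y*(y*(x)))))) * ((y*x*y) * (y*(x))) := by rw [hb]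
      _ = y*(y*(y*(x*(y*(y))))) * ((x*y*x) * (y*(y*(x)))) := by group
      _ = y*(y*(y*(x*(y*(y))))) * ((y*x*y) * (y*(y*(x)))) := by rw [hb]
      _ = y*y*y*x*y*y*y*x*y*y*y*x := by group

/-- Abstract form of the relations, from `y*x = x*z = z*y`. -/
private lemma braid245 (x y z : G) (h1 : y*x = x*z) (h2 : x*z = z*y) :
    (x^2*y^3*x^2*z^3*y^3 = y^3*x^2*z^3*y^3*x^2) ∧
    (y^3*x^2*z^3*y^3*x^2 = x^2*z^3*y^3*x^2*z^3) := by
  have hz : z = x⁻¹*(y*x) := by rw [h1]; group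
  have h3 : y*x = z*y := h1.trans h2
  rw [hz] at h3
  have h5 : x*(y*x) = x*(x⁻¹*(y*x)*y) := congrArg (x*·) h3
  have hb : x*y*x = y*x*y := by
    calc x*y*x = x*(y*x) := by group
      _ = x*(x⁻¹*(y*x)*y) := h5
      _ = y*x*y := by group
  have key := braid_key x y hb
  constructor
  · calc x^2*y^3*x^2*z^3*y^3
      = x*(x*y*y*y*x*y*y*y*x*y*y*y) := by rw [hz]; simp only [pow_succ, pow_zero, one_mul]; group
      _ = x*(y*y*y*x*y*y*y*x*y*y*y*x) := by rw [key]
      _ = (x*y*y*y*x*y*y*y*x*y*y*y)*x := by group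
      _ = (y*y*y*x*y*y*y*x*y*y*y*x)*x := by rw [key]
      _ = y^3*x^2*z^3*y^3*x^2 := by rw [hz]; simp only [pow_succ, pow_zero, one_mul]; group
  · calc y^3*x^2*z^3*y^3*x^2
      = (y*y*y*x*y*y*y*x*y*y*y*x)*x := by rw [hz]; simp only [pow_succ, pow_zero, one_mul]; group
      _ = (x*y*y*y*x*y*y*y*x*y*y*y)*x := by rw [← key]
      _ = x^2*z^3*y^3*x^2*z^3 := by rw [hz]; simp only [pow_succ, pow_zero, one_mul]; group

/-- conjugated braid relation step. -/
private lemma conj_braid (a s t : G) (hb : s*t*s = t*s*t) (hc : t*a = a*t)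
    (IH : a*s*a = s*a*s) : (s*a*s⁻¹)*t*(s*a*s⁻¹) = t*(s*a*s⁻¹)*t := by
  have h6 : s⁻¹*t*s = t*s*t⁻¹ := by
    have h := congrArg (fun w => s⁻¹ * w * t⁻¹) hb
    calc s⁻¹*t*s = s⁻¹*(t*s*t)*t⁻¹ := by group
      _ = s⁻¹*(s*t*s)*t⁻¹ := h.symm
      _ = t*s*t⁻¹ := by group
  have hc2 : t⁻¹*a = a*t⁻¹ := by
    calc t⁻¹*a = t⁻¹*(a*t)*t⁻¹ := by group
      _ = t⁻¹*(t*a)*t⁻¹ := by rw [← hc]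
      _ = a*t⁻¹ := by group
  calc (s*a*s⁻¹)*t*(s*a*s⁻¹)
      = s*(a) * ((s⁻¹*t*s) * (a*(s⁻¹))) := by group
    _ = s*(a) * ((t*s*t⁻¹) * (a*(s⁻¹))) := by rw [h6]
    _ = s * ((a*t) * (s*(t⁻¹*(a*(s⁻¹))))) := by group
    _ = s * ((t*a) * (s*(t⁻¹*(a*(s⁻¹))))) := by rw [← hc]
    _ = s*(t*(a*(s))) * ((t⁻¹*a) * (s⁻¹)) := by group
    _ = s*(t*(a*(s))) * ((a*t⁻¹) * (s⁻¹)) := by rw [hc2]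
    _ = s*(t) * ((a*s*a) * (t⁻¹*(s⁻¹))) := by group
    _ = s*(t) * ((s*a*s) * (t⁻¹*(s⁻¹))) := by rw [IH]
    _ = (s*t*s) * (a*(s*(t⁻¹*(s⁻¹)))) := by group
    _ = (t*s*t) * (a*(s*(t⁻¹*(s⁻¹)))) := by rw [hb]
    _ = t*(s) * ((t*a) * (s*(t⁻¹*(s⁻¹)))) := by group
    _ = t*(s) * ((a*t) * (s*(t⁻¹*(s⁻¹)))) := by rw [hc]
    _ = t*(s*(a)) * ((t*s*t⁻¹) * (s⁻¹)) := by group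
    _ = t*(s*(a)) * ((s⁻¹*t*s) * (s⁻¹)) := by rw [← h6]
    _ = t*(s*a*s⁻¹)*t := by group

end WordLemmas

section BraidLemmas

variable {n : ℕ}

private lemma relator_one {r : FreeGroup ℕ} (hr : r ∈ braidRels n) :
    PresentedGroup.mk (braidRels n) r = 1 :=
  (QuotientGroup.eq_one_iff r).mpr (Subgroup.subset_normalClosure hr)

private lemma gen_triv {i : ℕ} (h : i = 0 ∨ n ≤ i) : braidGen n i = 1 :=
  relator_one (Or.inr (Or.inr ⟨i, h, rfl⟩))

private lemma braid_rel {i : ℕ} (h1 : 1 ≤ i) (h2 : i + 2 ≤ n) :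
    braidGen n i * braidGen n (i+1) * braidGen n i
      = braidGen n (i+1) * braidGen n i * braidGen n (i+1) := by
  have h := relator_one (n := n) (Or.inl ⟨i, h1, h2, rfl⟩)
  rw [map_mul, map_mul, map_mul, map_inv, map_mul, map_mul, mul_inv_eq_one] at h
  exact h

private lemma comm_rel {i j : ℕ} (h : i + 2 ≤ j) :
    Commute (braidGen n i) (braidGen n j) := by
  rcases Nat.eq_zero_or_pos i with h0 | h1
  · subst h0; rw [gen_triv (Or.inl rfl)]; exact Commute.one_left _
  by_cases hn : n ≤ j
  · rw [gen_triv (Or.inr hn)]; exact Commute.one_right _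
  · have hh := relator_one (n := n) (Or.inr (Or.inl ⟨i, j, h1, h, by omega, rfl⟩))
    rw [map_mul, map_mul, map_inv, map_mul, mul_inv_eq_one] at hh
    exact hh

private lemma band_base (p : ℕ) : band n p (p+1) = braidGen n p := by
  have h : p + 1 - 1 - p = 0 := by omega
  simp only [band, h, List.range_zero, List.map_nil, List.prod_nil, one_mul, inv_one, mul_one]

private lemma band_succ {p s : ℕ} (h : p < s) :
    band n p (s+1) = braidGen n s * band n p s * (braidGen n s)⁻¹ := by
  have hP : ((List.range (s+1-1-p)).map (fun t => braidGen n (s+1-1-t))).prod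
      = braidGen n s * ((List.range (s-1-p)).map (fun t => braidGen n (s-1-t))).prod := by
    have h1 : s + 1 - 1 - p = (s - 1 - p) + 1 := by omega
    rw [h1, List.range_succ_eq_map, List.map_cons, List.prod_cons, List.map_map]
    have e0 : braidGen n (s + 1 - 1 - 0) = braidGen n s := by congr 1
    have e1 : (List.range (s - 1 - p)).map ((fun t => braidGen n (s + 1 - 1 - t)) ∘ Nat.succ)
        = (List.range (s - 1 - p)).map (fun t => braidGen n (s - 1 - t)) := by
      apply List.map_congr_left
      intro t _
      simp only [Function.comp_apply]
      congr 1
      omega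
    rw [e1]
    congr 1
  simp only [band]
  rw [hP]
  group

private lemma comm_band {p q u : ℕ} (hu : q + 1 ≤ u) (hpq : p < q) :
    Commute (braidGen n u) (band n p q) := by
  have hP : Commute (braidGen n u)
      (((List.range (q-1-p)).map (fun t => braidGen n (q-1-t))).prod) := by
    apply Commute.list_prod_right
    intro x hx
    obtain ⟨t, -, rfl⟩ := List.mem_map.mp hx
    exact (comm_rel (by omega)).symm
  simp only [band]
  exact (hP.mul_right ((comm_rel (show p + 2 ≤ u by omega)).symm)).mul_right hP.inv_right

private lemma band_braid {p : ℕ} (h1 : 1 ≤ p) : ∀ q, p < q → q + 1 ≤ n →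
    band n p q * braidGen n q * band n p q
      = braidGen n q * band n p q * braidGen n q := by
  intro q hpq
  induction q, hpq using Nat.le_induction with
  | base =>
    intro hn
    rw [band_base]
    exact braid_rel h1 (by omega)
  | succ q hq IH =>
    intro hn
    have IH' := IH (by omega)
    have hc : braidGen n (q+1) * band n p q = band n p q * braidGen n (q+1) :=
      (comm_band (le_refl (q+1)) (by omega)).eq
    have hb := braid_rel (n := n) (i := q) (by omega) (by omega)
    rw [band_succ (show p < q by omega)]
    exact conj_braid (band n p q) (braidGen n q) (braidGen n (q+1)) hb hc IH'

private lemma band_conj1 {p q : ℕ} (hpq : p < q) : ∀ r, q < r → r ≤ n →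
    band n q r * band n p q * (band n q r)⁻¹ = band n p r := by
  intro r hqr
  induction r, hqr using Nat.le_induction with
  | base =>
    intro _
    rw [band_base, ← band_succ hpq]
  | succ r hr IH =>
    intro hn
    have IH' := IH (by omega)
    have hc := comm_band (n := n) (show q + 1 ≤ r by omega) hpq
    have hc' : (braidGen n r)⁻¹ * band n p q * braidGen n r = band n p q := by
      calc (braidGen n r)⁻¹ * band n p q * braidGen n r
          = (braidGen n r)⁻¹ * (band n p q * braidGen n r) := by group
        _ = (braidGen n r)⁻¹ * (braidGen n r * band n p q) := by rw [← hc.eq]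
        _ = band n p q := by group
    rw [band_succ (show q < r by omega), band_succ (show p < r by omega)]
    calc braidGen n r * band n q r * (braidGen n r)⁻¹ * band n p q *
          (braidGen n r * band n q r * (braidGen n r)⁻¹)⁻¹
        = braidGen n r * (band n q r) *
            (((braidGen n r)⁻¹ * band n p q * braidGen n r) * ((band n q r)⁻¹ * ((braidGen n r)⁻¹))) := by
          group
      _ = braidGen n r * (band n q r) *
            ((band n p q) * ((band n q r)⁻¹ * ((braidGen n r)⁻¹))) := by rw [hc']
      _ = braidGen n r * (band n q r * band n p q * (band n q r)⁻¹) * (braidGen n r)⁻¹ := by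
          group
      _ = braidGen n r * band n p r * (braidGen n r)⁻¹ := by rw [IH']

private lemma band_conj2 {p q : ℕ} (h1 : 1 ≤ p) (hpq : p < q) : ∀ r, q < r → r ≤ n →
    band n p q * band n p r * (band n p q)⁻¹ = band n q r := by
  intro r hqr
  induction r, hqr using Nat.le_induction with
  | base =>
    intro hn
    rw [band_succ hpq, band_base]
    have ib := band_braid h1 q hpq hn
    calc band n p q * (braidGen n q * band n p q * (braidGen n q)⁻¹) * (band n p q)⁻¹
        = (band n p q * braidGen n q * band n p q) *
            ((braidGen n q)⁻¹ * (band n p q)⁻¹) := by group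
      _ = (braidGen n q * band n p q * braidGen n q) *
            ((braidGen n q)⁻¹ * (band n p q)⁻¹) := by rw [ib]
      _ = braidGen n q := by group
  | succ r hr IH =>
    intro hn
    have IH' := IH (by omega)
    have hc := comm_band (n := n) (show q + 1 ≤ r by omega) hpq
    have hc2 : band n p q * braidGen n r = braidGen n r * band n p q := hc.eq.symm
    rw [band_succ (show p < r by omega), band_succ (show q < r by omega)]
    calc band n p q * (braidGen n r * band n p r * (braidGen n r)⁻¹) * (band n p q)⁻¹
        = (band n p q * braidGen n r) *
            (band n p r * ((braidGen n r)⁻¹ * (band n p q)⁻¹)) := by group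
      _ = (braidGen n r * band n p q) *
            (band n p r * ((braidGen n r)⁻¹ * (band n p q)⁻¹)) := by rw [hc2]
      _ = (braidGen n r * band n p q) *
            (band n p r * ((band n p q)⁻¹ * (braidGen n r)⁻¹)) := by
          rw [hc.inv_left.inv_right.eq]
      _ = braidGen n r * (band n p q * band n p r * (band n p q)⁻¹) * (braidGen n r)⁻¹ := by
          group
      _ = braidGen n r * band n q r * (braidGen n r)⁻¹ := by rw [IH']

private lemma band_rel1 {p q r : ℕ} (h1 : 1 ≤ p) (hpq : p < q) (hqr : q < r) (hn : r ≤ n) :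
    band n q r * band n p q = band n p q * band n p r := by
  have h := band_conj2 h1 hpq r hqr hn
  rw [← h]; group

private lemma band_rel2 {p q r : ℕ} (h1 : 1 ≤ p) (hpq : p < q) (hqr : q < r) (hn : r ≤ n) :
    band n p q * band n p r = band n p r * band n q r := by
  have e1 := band_rel1 h1 hpq hqr hn
  have h := band_conj1 hpq r hqr hn
  have e2 : band n q r * band n p q = band n p r * band n q r := by rw [← h]; group
  exact e1.symm.trans e2

end BraidLemmas

theorem stmt16 (n : ℕ) (m : ℕ → ℕ → ℕ)
    (hsym : ∀ i j, m i j = m j i)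
    (hM : ∀ i j, 1 ≤ i → i ≤ n → 1 ≤ j → j ≤ n → i ≠ j → 2 ≤ m i j)
    (i j k : ℕ) (hcyc : (i < j ∧ j < k) ∨ (j < k ∧ k < i) ∨ (k < i ∧ i < j))
    (hi1 : 1 ≤ i) (hj1 : 1 ≤ j) (hk1 : 1 ≤ k) (hin : i ≤ n) (hjn : j ≤ n) (hkn : k ≤ n)
    (hij : m i j = 2) (hik : m i k = 3) (hjk : m j k = 3) :
    bp n m i j * bp n m j k * bp n m i j * bp n m i k * bp n m j k =
        bp n m j k * bp n m i j * bp n m i k * bp n m j k * bp n m i j ∧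
    bp n m j k * bp n m i j * bp n m i k * bp n m j k * bp n m i j =
        bp n m i j * bp n m i k * bp n m j k * bp n m i j * bp n m i k := by
  
  rcases hcyc with ⟨ha, hb⟩ | ⟨ha, hb⟩ | ⟨ha, hb⟩
  · -- i < j < k
    have e1 := band_rel1 (n := n) hi1 ha hb hkn
    have e2 := band_rel2 (n := n) hi1 ha hb hkn
    have key := braid245 (band n i j) (band n j k) (band n i k) e1 e2
    have b1 : bp n m i j = band n i j ^ 2 := by
      simp only [bp, bandS]; rw [min_eq_left ha.le, max_eq_right ha.le, hij]
    have b2 : bp n m j k = band n j k ^ 3 := by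
      simp only [bp, bandS]; rw [min_eq_left hb.le, max_eq_right hb.le, hjk]
    have b3 : bp n m i k = band n i k ^ 3 := by
      simp only [bp, bandS]; rw [min_eq_left (ha.trans hb).le, max_eq_right (ha.trans hb).le, hik]
    rw [b1, b2, b3]
    exact key
  · -- j < k < i
    have e1 := band_rel1 (n := n) hj1 ha hb hin
    have e2 := band_rel2 (n := n) hj1 ha hb hin
    have key := braid245 (band n j i) (band n j k) (band n k i) e2 (e1.trans e2).symm
    have b1 : bp n m i j = band n j i ^ 2 := by
      simp only [bp, bandS]
      rw [min_eq_right (ha.trans hb).le, max_eq_left (ha.trans hb).le, hij]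
    have b2 : bp n m j k = band n j k ^ 3 := by
      simp only [bp, bandS]; rw [min_eq_left ha.le, max_eq_right ha.le, hjk]
    have b3 : bp n m i k = band n k i ^ 3 := by
      simp only [bp, bandS]; rw [min_eq_right hb.le, max_eq_left hb.le, hik]
    rw [b1, b2, b3]
    exact key
  · -- k < i < j
    have e1 := band_rel1 (n := n) hk1 ha hb hjn
    have e2 := band_rel2 (n := n) hk1 ha hb hjn
    have key := braid245 (band n i j) (band n k j) (band n k i) (e1.trans e2).symm e1
    have b1 : bp n m i j = band n i j ^ 2 := by
      simp only [bp, bandS]; rw [min_eq_left hb.le, max_eq_right hb.le, hij]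
    have b2 : bp n m j k = band n k j ^ 3 := by
      simp only [bp, bandS]
      rw [min_eq_right (ha.trans hb).le, max_eq_left (ha.trans hb).le, hjk]
    have b3 : bp n m i k = band n k i ^ 3 := by
      simp only [bp, bandS]; rw [min_eq_right ha.le, max_eq_left ha.le, hik]
    rw [b1, b2, b3]
    exact key
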